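/- Let p, q ≥ 1 with n = p + q + 1 and λ > 1, and let D_λ be the linear automorphism of ℝ^{p+1} × ℝ^{q+1} that multiplies the first factor by λ and the second factor by λ⁻¹. The quotient of Ω := S^n ∖ (S^p ∪ S^q) by the ℤ-action m • v := D_λ^m v / ‖D_λ^m v‖ is homeomorphic to S^p × S^q × (ℝ/ℤ), where S^p and S^q denote the unit spheres of ℝ^{p+1} and ℝ^{q+1}; in particular this quotient is a compact Hausdorff space. -/

import Mathlib

noncomputable section

open Set

/-- The great `p`-sphere `S^p`. -/
def greatSphereP (n p : ℕ) : Set (EuclideanSpace ℝ (Fin (n + 1))) :=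
  {v | ‖v‖ = 1 ∧ ∀ k : Fin (n + 1), p + 1 ≤ (k : ℕ) → v k = 0}

/-- The complementary great `q`-sphere `S^q`. -/
def greatSphereQ (n p : ℕ) : Set (EuclideanSpace ℝ (Fin (n + 1))) :=
  {v | ‖v‖ = 1 ∧ ∀ k : Fin (n + 1), (k : ℕ) < p + 1 → v k = 0}

/-- `Ω := S^n ∖ (S^p ∪ S^q)` with its subspace topology. -/
def Omega (n p : ℕ) : Set (EuclideanSpace ℝ (Fin (n + 1))) :=
  {v | ‖v‖ = 1} \ (greatSphereP n p ∪ greatSphereQ n p)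

/-- `D_λ^m`: the linear automorphism multiplying the `ℝ^{p+1}`-factor by `λ^m`
and the `ℝ^{q+1}`-factor by `λ^{-m}`. -/
def Dmap (n p : ℕ) (lam : ℝ) (m : ℤ) (v : EuclideanSpace ℝ (Fin (n + 1))) :
    EuclideanSpace ℝ (Fin (n + 1)) :=
  WithLp.toLp 2 (fun k : Fin (n + 1) => (if (k : ℕ) < p + 1 then lam ^ m else lam ^ (-m)) * v k)

/-- The projectivized action `m • v := D_λ^m v / ‖D_λ^m v‖`. -/
def normAct (n p : ℕ) (lam : ℝ) (m : ℤ) (v : EuclideanSpace ℝ (Fin (n + 1))) :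
    EuclideanSpace ℝ (Fin (n + 1)) :=
  ‖Dmap n p lam m v‖⁻¹ • Dmap n p lam m v

/-- The orbit equivalence relation of the `ℤ`-action on `Ω`. -/
def orbitRel (n p : ℕ) (lam : ℝ) (v w : ↥(Omega n p)) : Prop :=
  ∃ m : ℤ, normAct n p lam m ↑v = ↑w

/-!
A point of `Ω` is a unit vector `(a, b)` with `a ∈ ℝ^{p+1}`, `b ∈ ℝ^{q+1}` both nonzero. Since
`‖a‖² + ‖b‖² = 1`, it is determined by the directions `a / ‖a‖`, `b / ‖b‖` and the ratio
`‖a‖ / ‖b‖`. The action of `m` keeps both directions and multiplies the ratio by `λ^{2m}`, so the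
coordinate `t = log_λ (‖a‖ / ‖b‖) / 2` identifies `Ω` with `S^p × S^q × ℝ`, the action becoming the
translation `t ↦ t + m`. Hence the quotient is `S^p × S^q × ℝ/ℤ`.
-/

open Metric WithLp Real Topology

def quotIntShiftHomeomorph (X : Type*) [TopologicalSpace X] :
    Quot (fun a b : X × ℝ => ∃ m : ℤ, (a.1, a.2 + m) = b) ≃ₜ X × AddCircle (1 : ℝ) :=
  have hq : IsQuotientMap (Prod.map id (QuotientAddGroup.mk : ℝ → AddCircle (1 : ℝ))) :=
    (IsOpenQuotientMap.id.prodMap QuotientAddGroup.isOpenQuotientMap_mk).isQuotientMap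
  (Homeomorph.Quot.congrRight fun a b => by
    rw [Setoid.ker_def]
    simp only [ContinuousMap.coe_mk, Prod.map, id, Prod.ext_iff, QuotientAddGroup.eq,
      AddSubgroup.mem_zmultiples_iff, zsmul_eq_mul, mul_one]
    constructor
    · rintro ⟨m, h1, h2⟩
      exact ⟨h1, m, by linarith⟩
    · rintro ⟨h1, m, h2⟩
      exact ⟨m, h1, by linarith⟩).trans (IsQuotientMap.homeomorph (f := ⟨_, hq.continuous⟩) hq)

section NormedSpace

variable {E : Type*} [NormedAddCommGroup E] [NormedSpace ℝ E]

lemma inv_norm_smul_smul_of_pos {c : ℝ} (hc : 0 < c) (a : E) :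
    ‖c • a‖⁻¹ • c • a = ‖a‖⁻¹ • a := by
  rw [norm_smul, Real.norm_of_nonneg hc.le, smul_smul, mul_inv_rev, mul_assoc,
    inv_mul_cancel₀ hc.ne', mul_one]

lemma eq_smul_of_inv_norm_smul_eq {a a' : E} (h : ‖a‖⁻¹ • a = ‖a'‖⁻¹ • a') :
    a' = (‖a'‖ / ‖a‖) • a := by
  rcases eq_or_ne a' 0 with rfl | ha'
  · simp
  rw [div_eq_mul_inv, mul_smul, h, smul_smul, mul_inv_cancel₀ (norm_ne_zero_iff.mpr ha'), one_smul]

end NormedSpace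

section HyperbolicFlow

variable {E F : Type*} [NormedAddCommGroup E] [NormedAddCommGroup F] {lam : ℝ}

variable (E F) in
def offAxesSphere : Set (WithLp 2 (E × F)) := {x | ‖x‖ = 1 ∧ x.fst ≠ 0 ∧ x.snd ≠ 0}

def flowTime (lam : ℝ) (x : WithLp 2 (E × F)) : ℝ := logb lam (‖x.fst‖ / ‖x.snd‖) / 2

lemma flowTime_toLp_of_norm_eq_one {u : E} {w : F} (hu : ‖u‖ = 1) (hw : ‖w‖ = 1) :
    flowTime lam (toLp 2 (u, w)) = 0 := by
  simp [flowTime, hu, hw]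

lemma continuousAt_flowTime {x : WithLp 2 (E × F)} (ha : x.fst ≠ 0) (hb : x.snd ≠ 0) :
    ContinuousAt (flowTime lam) x := by
  unfold flowTime
  fun_prop (disch := simp [ha, hb])

lemma norm_div_norm_eq_of_flowTime_eq (h0 : 0 < lam) (h1 : lam ≠ 1) {x y : WithLp 2 (E × F)}
    (hx : x ∈ offAxesSphere E F) (hy : y ∈ offAxesSphere E F)
    (h : flowTime lam x = flowTime lam y) : ‖x.fst‖ / ‖x.snd‖ = ‖y.fst‖ / ‖y.snd‖ := by
  have hpos : ∀ z ∈ offAxesSphere E F, 0 < ‖z.fst‖ / ‖z.snd‖ := fun z hz =>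
    div_pos (norm_pos_iff.mpr hz.2.1) (norm_pos_iff.mpr hz.2.2)
  rw [← rpow_logb h0 h1 (hpos x hx), (div_left_inj' two_ne_zero).mp h, rpow_logb h0 h1 (hpos y hy)]

variable [NormedSpace ℝ E] [NormedSpace ℝ F]

def hyperbolicFlow (lam t : ℝ) (x : WithLp 2 (E × F)) : WithLp 2 (E × F) :=
  toLp 2 (lam ^ t • x.fst, lam ^ (-t) • x.snd)

def normalizedFlow (lam t : ℝ) (x : WithLp 2 (E × F)) : WithLp 2 (E × F) :=
  ‖hyperbolicFlow lam t x‖⁻¹ • hyperbolicFlow lam t x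

lemma continuous_hyperbolicFlow (h0 : 0 < lam) :
    Continuous fun y : ℝ × WithLp 2 (E × F) => hyperbolicFlow lam y.1 y.2 := by
  unfold hyperbolicFlow
  fun_prop (disch := positivity)

lemma hyperbolicFlow_ne_zero (h0 : 0 < lam) (t : ℝ) {x : WithLp 2 (E × F)} (ha : x.fst ≠ 0) :
    hyperbolicFlow lam t x ≠ 0 := by
  intro h
  have := congrArg WithLp.fst h
  simp only [hyperbolicFlow, toLp_fst, zero_fst] at this
  exact ha ((smul_eq_zero.mp this).resolve_left (rpow_pos_of_pos h0 t).ne')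

lemma norm_hyperbolicFlow_pos (h0 : 0 < lam) (t : ℝ) {x : WithLp 2 (E × F)} (ha : x.fst ≠ 0) :
    0 < ‖hyperbolicFlow lam t x‖ :=
  norm_pos_iff.mpr (hyperbolicFlow_ne_zero h0 t ha)

lemma flowTime_smul {c : ℝ} (hc : c ≠ 0) (x : WithLp 2 (E × F)) :
    flowTime lam (c • x) = flowTime lam x := by
  simp only [flowTime, smul_fst, smul_snd, norm_smul]
  rw [mul_div_mul_left _ _ (norm_ne_zero_iff.mpr hc)]

lemma flowTime_hyperbolicFlow (h0 : 0 < lam) (h1 : lam ≠ 1) (t : ℝ) {x : WithLp 2 (E × F)}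
    (ha : x.fst ≠ 0) (hb : x.snd ≠ 0) :
    flowTime lam (hyperbolicFlow lam t x) = flowTime lam x + t := by
  have hpow : ∀ s : ℝ, ‖lam ^ s‖ = lam ^ s := fun s => Real.norm_of_nonneg (rpow_nonneg h0.le s)
  simp only [flowTime, hyperbolicFlow, toLp_fst, toLp_snd, norm_smul, hpow]
  rw [mul_div_mul_comm, ← rpow_sub h0, logb_mul (rpow_pos_of_pos h0 _).ne'
    (div_ne_zero (norm_ne_zero_iff.mpr ha) (norm_ne_zero_iff.mpr hb)), logb_rpow h0 h1]
  ring

lemma flowTime_normalizedFlow (h0 : 0 < lam) (h1 : lam ≠ 1) (t : ℝ) {x : WithLp 2 (E × F)}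
    (ha : x.fst ≠ 0) (hb : x.snd ≠ 0) :
    flowTime lam (normalizedFlow lam t x) = flowTime lam x + t := by
  rw [normalizedFlow, flowTime_smul (inv_ne_zero (norm_hyperbolicFlow_pos h0 t ha).ne'),
    flowTime_hyperbolicFlow h0 h1 t ha hb]

lemma normalizedFlow_fst (lam t : ℝ) (x : WithLp 2 (E × F)) :
    (normalizedFlow lam t x).fst = (‖hyperbolicFlow lam t x‖⁻¹ * lam ^ t) • x.fst :=
  smul_smul _ _ _

lemma normalizedFlow_snd (lam t : ℝ) (x : WithLp 2 (E × F)) :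
    (normalizedFlow lam t x).snd = (‖hyperbolicFlow lam t x‖⁻¹ * lam ^ (-t)) • x.snd :=
  smul_smul _ _ _

lemma inv_norm_smul_normalizedFlow_fst (h0 : 0 < lam) (t : ℝ) {x : WithLp 2 (E × F)}
    (ha : x.fst ≠ 0) :
    ‖(normalizedFlow lam t x).fst‖⁻¹ • (normalizedFlow lam t x).fst = ‖x.fst‖⁻¹ • x.fst := by
  rw [normalizedFlow_fst, inv_norm_smul_smul_of_pos
    (mul_pos (inv_pos.mpr (norm_hyperbolicFlow_pos h0 t ha)) (rpow_pos_of_pos h0 _))]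

lemma inv_norm_smul_normalizedFlow_snd (h0 : 0 < lam) (t : ℝ) {x : WithLp 2 (E × F)}
    (ha : x.fst ≠ 0) :
    ‖(normalizedFlow lam t x).snd‖⁻¹ • (normalizedFlow lam t x).snd = ‖x.snd‖⁻¹ • x.snd := by
  rw [normalizedFlow_snd, inv_norm_smul_smul_of_pos
    (mul_pos (inv_pos.mpr (norm_hyperbolicFlow_pos h0 t ha)) (rpow_pos_of_pos h0 _))]

lemma normalizedFlow_mem_offAxesSphere (h0 : 0 < lam) (t : ℝ) {x : WithLp 2 (E × F)}
    (ha : x.fst ≠ 0) (hb : x.snd ≠ 0) : normalizedFlow lam t x ∈ offAxesSphere E F := by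
  have hc : ∀ s : ℝ, ‖hyperbolicFlow lam t x‖⁻¹ * lam ^ s ≠ 0 := fun s =>
    (mul_pos (inv_pos.mpr (norm_hyperbolicFlow_pos h0 t ha)) (rpow_pos_of_pos h0 s)).ne'
  refine ⟨norm_smul_inv_norm (hyperbolicFlow_ne_zero h0 t ha), ?_, ?_⟩
  · rw [normalizedFlow_fst]; exact smul_ne_zero (hc t) ha
  · rw [normalizedFlow_snd]; exact smul_ne_zero (hc (-t)) hb

def flowCoords (lam : ℝ) (x : offAxesSphere E F) : (sphere (0 : E) 1 × sphere (0 : F) 1) × ℝ :=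
  ((⟨‖x.1.fst‖⁻¹ • x.1.fst, mem_sphere_zero_iff_norm.mpr (norm_smul_inv_norm x.2.2.1)⟩,
    ⟨‖x.1.snd‖⁻¹ • x.1.snd, mem_sphere_zero_iff_norm.mpr (norm_smul_inv_norm x.2.2.2)⟩),
    flowTime lam x.1)

def ofFlowCoords (h0 : 0 < lam) (y : (sphere (0 : E) 1 × sphere (0 : F) 1) × ℝ) :
    offAxesSphere E F :=
  ⟨normalizedFlow lam y.2 (toLp 2 (y.1.1, y.1.2)), normalizedFlow_mem_offAxesSphere h0 _
    (ne_zero_of_mem_unit_sphere y.1.1) (ne_zero_of_mem_unit_sphere y.1.2)⟩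

lemma flowCoords_normalizedFlow (h0 : 0 < lam) (h1 : lam ≠ 1) (t : ℝ) (x : offAxesSphere E F) :
    flowCoords lam ⟨normalizedFlow lam t x, normalizedFlow_mem_offAxesSphere h0 t x.2.2.1 x.2.2.2⟩
      = ((flowCoords lam x).1, (flowCoords lam x).2 + t) :=
  Prod.ext (Prod.ext (Subtype.ext (inv_norm_smul_normalizedFlow_fst h0 t x.2.2.1))
    (Subtype.ext (inv_norm_smul_normalizedFlow_snd h0 t x.2.2.1)))
    (flowTime_normalizedFlow h0 h1 t x.2.2.1 x.2.2.2)

lemma flowCoords_ofFlowCoords (h0 : 0 < lam) (h1 : lam ≠ 1)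
    (y : (sphere (0 : E) 1 × sphere (0 : F) 1) × ℝ) : flowCoords lam (ofFlowCoords h0 y) = y := by
  obtain ⟨⟨⟨u, hu⟩, ⟨w, hw⟩⟩, t⟩ := y
  rw [mem_sphere_zero_iff_norm] at hu hw
  have hu0 : u ≠ 0 := norm_ne_zero_iff.mp (by rw [hu]; exact one_ne_zero)
  have hw0 : w ≠ 0 := norm_ne_zero_iff.mp (by rw [hw]; exact one_ne_zero)
  refine Prod.ext (Prod.ext (Subtype.ext ?_) (Subtype.ext ?_)) ?_
  · exact (inv_norm_smul_normalizedFlow_fst (x := toLp 2 (u, w)) h0 t hu0).trans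
      (by rw [toLp_fst, hu, inv_one, one_smul])
  · exact (inv_norm_smul_normalizedFlow_snd (x := toLp 2 (u, w)) h0 t hu0).trans
      (by rw [toLp_snd, hw, inv_one, one_smul])
  · exact (flowTime_normalizedFlow (x := toLp 2 (u, w)) h0 h1 t hu0 hw0).trans
      (by rw [flowTime_toLp_of_norm_eq_one hu hw, zero_add])

-- Equal directions and norm ratios make `y` a positive multiple of `x`, which is `1` on the sphere.
lemma flowCoords_injective (h0 : 0 < lam) (h1 : lam ≠ 1) :
    Function.Injective (flowCoords (E := E) (F := F) lam) := by
  rintro ⟨x, hx⟩ ⟨y, hy⟩ hxy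
  simp only [flowCoords, Prod.mk.injEq, Subtype.mk.injEq] at hxy
  obtain ⟨⟨hfst, hsnd⟩, htime⟩ := hxy
  have hratio := norm_div_norm_eq_of_flowTime_eq h0 h1 hx hy htime
  refine Subtype.ext (show x = y from ?_)
  obtain ⟨hx1, ha, hb⟩ := hx
  obtain ⟨hy1, -, hb'⟩ := hy
  have ha₀ := norm_pos_iff.mpr ha
  have hb₀ := norm_pos_iff.mpr hb
  set k := ‖y.snd‖ / ‖x.snd‖
  have hk : ‖y.fst‖ / ‖x.fst‖ = k := by
    rw [div_eq_div_iff hb₀.ne' (norm_pos_iff.mpr hb').ne'] at hratio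
    rw [div_eq_div_iff ha₀.ne' hb₀.ne']
    linarith
  have hyx : y = k • x := by
    refine WithLp.ofLp_injective 2 (Prod.ext ?_ ?_)
    · show y.fst = k • x.fst
      rw [← hk]; exact eq_smul_of_inv_norm_smul_eq hfst
    · exact eq_smul_of_inv_norm_smul_eq hsnd
  have hk1 : k = 1 := by
    have := congrArg norm hyx
    rwa [norm_smul, hx1, hy1, mul_one, Real.norm_of_nonneg (by positivity), eq_comm] at this
  rw [hyx, hk1, one_smul]

lemma continuous_flowCoords : Continuous (flowCoords (E := E) (F := F) lam) := by
  have hfst : Continuous fun x : offAxesSphere E F => x.1.fst := by fun_prop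
  have hsnd : Continuous fun x : offAxesSphere E F => x.1.snd := by fun_prop
  refine .prodMk (.prodMk (.subtype_mk ?_ _) (.subtype_mk ?_ _)) ?_
  · exact (hfst.norm.inv₀ fun x => norm_ne_zero_iff.mpr x.2.2.1).smul hfst
  · exact (hsnd.norm.inv₀ fun x => norm_ne_zero_iff.mpr x.2.2.2).smul hsnd
  · exact continuous_iff_continuousAt.mpr fun x =>
      (continuousAt_flowTime x.2.2.1 x.2.2.2).comp continuous_subtype_val.continuousAt

lemma continuous_ofFlowCoords (h0 : 0 < lam) :
    Continuous (ofFlowCoords (E := E) (F := F) h0) := by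
  have hD : Continuous fun y : (sphere (0 : E) 1 × sphere (0 : F) 1) × ℝ =>
      hyperbolicFlow lam y.2 (toLp 2 ((y.1.1 : E), (y.1.2 : F))) :=
    (continuous_hyperbolicFlow h0).comp
      (continuous_snd.prodMk ((prod_continuous_toLp 2 E F).comp (by fun_prop)))
  exact .subtype_mk ((hD.norm.inv₀ fun y =>
    (norm_hyperbolicFlow_pos (x := toLp 2 ((y.1.1 : E), (y.1.2 : F))) h0 _
      (ne_zero_of_mem_unit_sphere y.1.1)).ne').smul hD) _

variable (E F) in
def offAxesSphereHomeomorph (h0 : 0 < lam) (h1 : lam ≠ 1) :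
    offAxesSphere E F ≃ₜ (sphere (0 : E) 1 × sphere (0 : F) 1) × ℝ where
  toFun := flowCoords lam
  invFun := ofFlowCoords h0
  left_inv _ := flowCoords_injective h0 h1 (flowCoords_ofFlowCoords h0 h1 _)
  right_inv := flowCoords_ofFlowCoords h0 h1
  continuous_toFun := continuous_flowCoords
  continuous_invFun := continuous_ofFlowCoords h0

lemma normalizedFlow_eq_iff (h0 : 0 < lam) (h1 : lam ≠ 1) (t : ℝ) (x y : offAxesSphere E F) :
    normalizedFlow lam t x = (y : WithLp 2 (E × F)) ↔
      ((flowCoords lam x).1, (flowCoords lam x).2 + t) = flowCoords lam y := by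
  rw [← flowCoords_normalizedFlow h0 h1, (flowCoords_injective h0 h1).eq_iff, Subtype.ext_iff]

variable (E F) in
def quotNormalizedFlowHomeomorph (h0 : 0 < lam) (h1 : lam ≠ 1) :
    Quot (fun x y : offAxesSphere E F => ∃ m : ℤ, normalizedFlow lam m x = (y : WithLp 2 (E × F)))
      ≃ₜ (sphere (0 : E) 1 × sphere (0 : F) 1) × AddCircle (1 : ℝ) :=
  (Homeomorph.Quot.congr (offAxesSphereHomeomorph E F h0 h1) fun x y =>
    exists_congr fun m : ℤ => normalizedFlow_eq_iff h0 h1 m x y).trans (quotIntShiftHomeomorph _)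

end HyperbolicFlow

section Euclidean

variable (p q : ℕ)

def splitL2 : EuclideanSpace ℝ (Fin (p + q + 1 + 1)) ≃ₗᵢ[ℝ]
    WithLp 2 (EuclideanSpace ℝ (Fin (p + 1)) × EuclideanSpace ℝ (Fin (q + 1))) :=
  (LinearIsometryEquiv.piLpCongrLeft 2 ℝ ℝ
    ((finCongr (by omega)).trans finSumFinEquiv.symm)).trans
    (PiLp.sumPiLpEquivProdLpPiLp 2 fun _ => ℝ)

variable {p q}

lemma splitL2_fst_apply (v : EuclideanSpace ℝ (Fin (p + q + 1 + 1))) (i : Fin (p + 1)) :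
    (splitL2 p q v).fst i = v ⟨i, by omega⟩ :=
  rfl

lemma splitL2_snd_apply (v : EuclideanSpace ℝ (Fin (p + q + 1 + 1))) (j : Fin (q + 1)) :
    (splitL2 p q v).snd j = v ⟨p + 1 + j, by omega⟩ :=
  rfl

lemma splitL2_fst_eq_zero_iff (v : EuclideanSpace ℝ (Fin (p + q + 1 + 1))) :
    (splitL2 p q v).fst = 0 ↔ ∀ k : Fin (p + q + 1 + 1), (k : ℕ) < p + 1 → v k = 0 := by
  constructor
  · intro h k hk
    simpa [splitL2_fst_apply] using congrArg (· ⟨k, hk⟩) h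
  · intro h
    ext i
    exact h _ i.isLt

lemma splitL2_snd_eq_zero_iff (v : EuclideanSpace ℝ (Fin (p + q + 1 + 1))) :
    (splitL2 p q v).snd = 0 ↔ ∀ k : Fin (p + q + 1 + 1), p + 1 ≤ (k : ℕ) → v k = 0 := by
  constructor
  · intro h k hk
    have := congrArg (· ⟨k - (p + 1), by omega⟩) h
    simp only [splitL2_snd_apply, WithLp.ofLp_zero, Pi.zero_apply] at this
    convert this using 2
    ext
    simp only
    omega
  · intro h
    ext j
    exact h _ (by simp)

lemma mem_Omega_iff_splitL2_mem (v : EuclideanSpace ℝ (Fin (p + q + 1 + 1))) :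
    v ∈ Omega (p + q + 1) p ↔ splitL2 p q v ∈ offAxesSphere _ _ := by
  simp only [Omega, greatSphereP, greatSphereQ, offAxesSphere, ← splitL2_fst_eq_zero_iff,
    ← splitL2_snd_eq_zero_iff, mem_sdiff, mem_union, mem_ofPred_eq,
    LinearIsometryEquiv.norm_map]
  tauto

lemma splitL2_Dmap (lam : ℝ) (m : ℤ) (v : EuclideanSpace ℝ (Fin (p + q + 1 + 1))) :
    splitL2 p q (Dmap (p + q + 1) p lam m v) = hyperbolicFlow lam m (splitL2 p q v) := by
  refine WithLp.ofLp_injective 2 (Prod.ext ?_ ?_)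
  · ext i
    show (splitL2 p q _).fst i = (lam ^ (m : ℝ) • (splitL2 p q v).fst) i
    rw [splitL2_fst_apply, PiLp.smul_apply, splitL2_fst_apply, Real.rpow_intCast, smul_eq_mul]
    exact congrArg (· * _) (if_pos i.isLt)
  · ext j
    show (splitL2 p q _).snd j = (lam ^ (-(m : ℝ)) • (splitL2 p q v).snd) j
    rw [splitL2_snd_apply, PiLp.smul_apply, splitL2_snd_apply, ← Int.cast_neg,
      Real.rpow_intCast, smul_eq_mul]
    exact congrArg (· * _) (if_neg (by simp; omega))

lemma splitL2_normAct (lam : ℝ) (m : ℤ) (v : EuclideanSpace ℝ (Fin (p + q + 1 + 1))) :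
    splitL2 p q (normAct (p + q + 1) p lam m v) = normalizedFlow lam m (splitL2 p q v) := by
  rw [normAct, map_smul, ← LinearIsometryEquiv.norm_map (splitL2 p q), splitL2_Dmap]
  rfl

variable (p q) in
def omegaHomeomorphOffAxesSphere : Omega (p + q + 1) p ≃ₜ
    offAxesSphere (EuclideanSpace ℝ (Fin (p + 1))) (EuclideanSpace ℝ (Fin (q + 1))) :=
  (splitL2 p q).toHomeomorph.subtype mem_Omega_iff_splitL2_mem

lemma orbitRel_iff {lam : ℝ} (v w : Omega (p + q + 1) p) :
    orbitRel (p + q + 1) p lam v w ↔ ∃ m : ℤ,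
      normalizedFlow lam m (omegaHomeomorphOffAxesSphere p q v) =
        (omegaHomeomorphOffAxesSphere p q w).1 := by
  refine exists_congr fun m => ?_
  rw [← (splitL2 p q).injective.eq_iff, splitL2_normAct]
  rfl

end Euclidean

theorem quotient_homeomorph_prod_addCircle
    (p q : ℕ) (n : ℕ) (hn : n = p + q + 1)
    (lam : ℝ) (hlam : 1 < lam) :
    Nonempty (Quot (orbitRel n p lam) ≃ₜ
      (Metric.sphere (0 : EuclideanSpace ℝ (Fin (p + 1))) 1) ×
        (Metric.sphere (0 : EuclideanSpace ℝ (Fin (q + 1))) 1) ×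
          AddCircle (1 : ℝ)) ∧
    CompactSpace (Quot (orbitRel n p lam)) ∧
    T2Space (Quot (orbitRel n p lam)) := by
  subst hn
  let e : Quot (orbitRel (p + q + 1) p lam) ≃ₜ _ :=
    ((Homeomorph.Quot.congr (omegaHomeomorphOffAxesSphere p q) fun _ _ => orbitRel_iff _ _).trans
      (quotNormalizedFlowHomeomorph _ _ (zero_lt_one.trans hlam) hlam.ne')).trans
      (Homeomorph.prodAssoc _ _ _)
  exact ⟨⟨e⟩, e.symm.compactSpace, e.symm.t2Space⟩
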